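/- arXiv:2008.06129 — 2 statements merged into one kernel-verified Lean document; each statement's English description precedes it below -/
import Mathlib

section
/- Trace-type inequality: let $\Omega \subset \mathbb{R}^d$ be a bounded Lipschitz domain, $s \in (0,1)$, $\gamma \ge s$. There exists a constant $C > 0$ such that for all $v \in \mathbb{V}$, $\left(\int_{\mathbb{R}^d} \frac{|v(x)|^2}{1+|x|^{d+2\gamma}}\,dx\right)^{1/2} \le C\, \|v\|_{\mathbb{V}}$. Hence the embedding $\mathbb{V} \subset L^2_\gamma(\mathbb{R}^d)$ is continuous for all $\gamma \ge s$. -/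
open MeasureTheory
open scoped ENNReal

/-- The normalization constant of the fractional Laplacian. -/
noncomputable def Cds (d : ℕ) (s : ℝ) : ℝ :=
  2 ^ (2 * s) * s * Real.Gamma (s + d / 2) / (Real.pi ^ ((d : ℝ) / 2) * Real.Gamma (1 - s))

/-- The squared `𝕏`-seminorm `|v|_𝕏² = (C_{d,s}/2) ∬_{(ℝᵈ×ℝᵈ)∖(Ωᶜ×Ωᶜ)}
|v(x)-v(y)|²/|x-y|^{d+2s}`. -/
noncomputable def Xsemi2 (d : ℕ) (s : ℝ) (Ω : Set (EuclideanSpace ℝ (Fin d)))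
    (v : EuclideanSpace ℝ (Fin d) → ℝ) : ℝ≥0∞ :=
  ENNReal.ofReal (Cds d s / 2) *
    ∫⁻ p in (Set.univ ×ˢ Set.univ) \ (Ωᶜ ×ˢ Ωᶜ),
      ENNReal.ofReal (|v p.1 - v p.2| ^ 2 / ‖p.1 - p.2‖ ^ ((d : ℝ) + 2 * s))

/-- The squared `𝕍`-norm `‖v‖_𝕍² = ‖v‖²_{L²(Ω)} + |v|_𝕏²`. -/
noncomputable def Vnorm2 (d : ℕ) (s : ℝ) (Ω : Set (EuclideanSpace ℝ (Fin d)))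
    (v : EuclideanSpace ℝ (Fin d) → ℝ) : ℝ≥0∞ :=
  (∫⁻ x in Ω, ENNReal.ofReal (v x ^ 2)) + Xsemi2 d s Ω v

/-!
For `x ∈ ℝᵈ` and `y ∈ Ω` we have `|x - y|^{d+2s} ≲ 1 + |x|^{d+2γ}` because `Ω` is bounded and
`γ ≥ s`, so `|v(x)|² ≤ 2|v(x) - v(y)|² + 2|v(y)|²` gives
`|v(x)|²/(1+|x|^{d+2γ}) ≲ |v(x)-v(y)|²/|x-y|^{d+2s} + |v(y)|²/(1+|x|^{d+2γ})`.
Averaging over `y ∈ Ω` and integrating over `x ∈ ℝᵈ`, the first term is controlled by the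
`𝕏`-seminorm (the region `ℝᵈ × Ω` avoids `Ωᶜ × Ωᶜ`) and the second by `‖v‖²_{L²(Ω)}`, since
`(1+|x|^{d+2γ})⁻¹` is integrable for `γ > 0`.
-/

lemma max_one_rpow_le_one_add_rpow {p q t : ℝ} (hpq : p ≤ q) (ht : 0 ≤ t) :
    max 1 t ^ p ≤ 1 + t ^ q := by
  rcases le_total t 1 with h | h
  · rw [max_eq_left h, Real.one_rpow]
    linarith [Real.rpow_nonneg ht q]
  · rw [max_eq_right h]
    linarith [Real.rpow_le_rpow_of_exponent_le h hpq, Real.rpow_nonneg ht q]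

lemma one_add_rpow_le_two_rpow_mul {p q t : ℝ} (hp : 0 ≤ p) (hpq : p ≤ q) (ht : 0 ≤ t) :
    (1 + t) ^ p ≤ 2 ^ p * (1 + t ^ q) :=
  calc (1 + t) ^ p ≤ (2 * max 1 t) ^ p :=
        Real.rpow_le_rpow (by linarith) (by linarith [le_max_left 1 t, le_max_right 1 t]) hp
    _ = 2 ^ p * max 1 t ^ p := Real.mul_rpow zero_le_two (le_max_of_le_left zero_le_one)
    _ ≤ 2 ^ p * (1 + t ^ q) := by
        gcongr
        exact max_one_rpow_le_one_add_rpow hpq ht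

lemma Bornology.IsBounded.exists_rpow_norm_sub_le {E : Type*} [SeminormedAddCommGroup E]
    {Ω : Set E} (hΩ : Bornology.IsBounded Ω) {p q : ℝ} (hp : 0 ≤ p) (hpq : p ≤ q) :
    ∃ K : ℝ, 0 ≤ K ∧ ∀ x, ∀ y ∈ Ω, ‖x - y‖ ^ p ≤ K * (1 + ‖x‖ ^ q) := by
  obtain ⟨R₀, hR₀⟩ := hΩ.exists_norm_le
  set R := max R₀ 1
  have hR : 1 ≤ R := le_max_right _ _
  refine ⟨R ^ p * 2 ^ p, by positivity, fun x y hy => ?_⟩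
  have hxy : ‖x - y‖ ≤ R * (1 + ‖x‖) := by
    nlinarith [norm_sub_le x y, norm_nonneg x, (hR₀ y hy).trans (le_max_left R₀ 1)]
  calc ‖x - y‖ ^ p ≤ (R * (1 + ‖x‖)) ^ p := Real.rpow_le_rpow (norm_nonneg _) hxy hp
    _ = R ^ p * (1 + ‖x‖) ^ p := Real.mul_rpow (by linarith) (by positivity)
    _ ≤ R ^ p * (2 ^ p * (1 + ‖x‖ ^ q)) := by
        gcongr
        exact one_add_rpow_le_two_rpow_mul hp hpq (norm_nonneg x)
    _ = R ^ p * 2 ^ p * (1 + ‖x‖ ^ q) := by ring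

lemma lintegral_inv_one_add_norm_rpow_lt_top {E : Type*} [NormedAddCommGroup E]
    [NormedSpace ℝ E] [FiniteDimensional ℝ E] [MeasurableSpace E] [BorelSpace E]
    (μ : Measure E) [μ.IsAddHaarMeasure] {q : ℝ} (hq : Module.finrank ℝ E < q) :
    ∫⁻ x, ENNReal.ofReal ((1 + ‖x‖ ^ q)⁻¹) ∂μ < ⊤ := by
  have hq0 : 0 ≤ q := (Nat.cast_nonneg _).trans hq.le
  have hle : ∀ x : E, ENNReal.ofReal ((1 + ‖x‖ ^ q)⁻¹) ≤
      ENNReal.ofReal (2 ^ q) * ENNReal.ofReal ((1 + ‖x‖) ^ (-q)) := fun x => by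
    rw [← ENNReal.ofReal_mul (by positivity), Real.rpow_neg (by positivity),
      ← div_eq_mul_inv]
    refine ENNReal.ofReal_le_ofReal ?_
    rw [inv_le_iff_one_le_mul₀ (by positivity), ← mul_div_right_comm,
      one_le_div (by positivity)]
    exact one_add_rpow_le_two_rpow_mul hq0 le_rfl (norm_nonneg x)
  calc ∫⁻ x, ENNReal.ofReal ((1 + ‖x‖ ^ q)⁻¹) ∂μ
      ≤ ∫⁻ x, ENNReal.ofReal (2 ^ q) * ENNReal.ofReal ((1 + ‖x‖) ^ (-q)) ∂μ :=
        lintegral_mono hle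
    _ = ENNReal.ofReal (2 ^ q) * ∫⁻ x, ENNReal.ofReal ((1 + ‖x‖) ^ (-q)) ∂μ :=
        lintegral_const_mul _ (by fun_prop)
    _ < ⊤ := ENNReal.mul_lt_top ENNReal.ofReal_lt_top (finite_integral_one_add_norm hq)

lemma div_le_mul_div_of_le_mul {a A B K : ℝ} (ha : 0 ≤ a) (hA : 0 < A) (hB : 0 < B)
    (hAB : A ≤ K * B) : a / B ≤ K * (a / A) := by
  rw [mul_div_assoc', div_le_div_iff₀ hB hA]
  nlinarith

lemma abs_sq_div_le_of_rpow_norm_sub_le {E : Type*} [NormedAddCommGroup E] (v : E → ℝ)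
    {x y : E} {p B K : ℝ} (hB : 0 < B) (hxy : ‖x - y‖ ^ p ≤ K * B) :
    |v x| ^ 2 / B ≤ 2 * K * (|v x - v y| ^ 2 / ‖x - y‖ ^ p) + 2 * B⁻¹ * v y ^ 2 := by
  rcases eq_or_ne x y with rfl | hne
  · have : v x ^ 2 / B ≤ 2 * B⁻¹ * v x ^ 2 := by
      rw [div_eq_inv_mul, mul_comm 2, mul_assoc]
      nlinarith [inv_pos.2 hB, sq_nonneg (v x)]
    simpa using this
  have hA : 0 < ‖x - y‖ ^ p := Real.rpow_pos_of_pos (norm_pos_iff.2 (sub_ne_zero.2 hne)) p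
  have hsplit : |v x| ^ 2 ≤ 2 * |v x - v y| ^ 2 + 2 * v y ^ 2 := by
    simp only [sq_abs]
    nlinarith [sq_nonneg (v x - 2 * v y)]
  calc |v x| ^ 2 / B ≤ 2 * (|v x - v y| ^ 2 / B) + 2 * B⁻¹ * v y ^ 2 := by
        rw [div_eq_inv_mul, div_eq_inv_mul]
        nlinarith [inv_pos.2 hB]
    _ ≤ 2 * K * (|v x - v y| ^ 2 / ‖x - y‖ ^ p) + 2 * B⁻¹ * v y ^ 2 := by
        linarith [div_le_mul_div_of_le_mul (sq_nonneg |v x - v y|) hA hB hxy]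

theorem lintegral_mul_measure_le_of_forall_le_add {α β : Type*} [MeasurableSpace α]
    [MeasurableSpace β] {μ : Measure α} {ν : Measure β} [SFinite μ] [SFinite ν] {s : Set β}
    {f w : α → ℝ≥0∞} {g : β → ℝ≥0∞} {G : α × β → ℝ≥0∞} (a : ℝ≥0∞) (hG : Measurable G)
    (hw : Measurable w) (hg : Measurable g) (h : ∀ x, ∀ y ∈ s, f x ≤ a * G (x, y) + w x * g y) :
    (∫⁻ x, f x ∂μ) * ν s ≤
      a * ∫⁻ p in Set.univ ×ˢ s, G p ∂μ.prod ν + (∫⁻ x, w x ∂μ) * ∫⁻ y in s, g y ∂ν := by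
  have hGx : ∀ x, Measurable fun y => G (x, y) := fun x => hG.comp measurable_prodMk_left
  have hinner : Measurable fun x => ∫⁻ y in s, G (x, y) ∂ν := hG.lintegral_prod_right'
  have havg : ∀ x, f x * ν s ≤ a * ∫⁻ y in s, G (x, y) ∂ν + w x * ∫⁻ y in s, g y ∂ν := by
    intro x
    calc f x * ν s = ∫⁻ _ in s, f x ∂ν := (setLIntegral_const s (f x)).symm
      _ ≤ ∫⁻ y in s, (a * G (x, y) + w x * g y) ∂ν :=
        setLIntegral_mono (((hGx x).const_mul a).add (hg.const_mul (w x))) (h x)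
      _ = a * ∫⁻ y in s, G (x, y) ∂ν + w x * ∫⁻ y in s, g y ∂ν := by
        rw [lintegral_add_left ((hGx x).const_mul a), lintegral_const_mul a (hGx x),
          lintegral_const_mul (w x) hg]
  calc (∫⁻ x, f x ∂μ) * ν s ≤ ∫⁻ x, f x * ν s ∂μ := lintegral_mul_const_le _ _
    _ ≤ ∫⁻ x, (a * ∫⁻ y in s, G (x, y) ∂ν + w x * ∫⁻ y in s, g y ∂ν) ∂μ := lintegral_mono havg
    _ = a * ∫⁻ p in Set.univ ×ˢ s, G p ∂μ.prod ν + (∫⁻ x, w x ∂μ) * ∫⁻ y in s, g y ∂ν := by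
      rw [lintegral_add_left (hinner.const_mul a), lintegral_const_mul a hinner,
        lintegral_mul_const _ hw, setLIntegral_prod _ hG.aemeasurable, Measure.restrict_univ]

lemma Cds_pos {d : ℕ} {s : ℝ} (hs : s ∈ Set.Ioo (0 : ℝ) 1) : 0 < Cds d s := by
  obtain ⟨hs₀, hs₁⟩ := hs
  have hΓ₁ : 0 < Real.Gamma (s + d / 2) := Real.Gamma_pos_of_pos (by positivity)
  have hΓ₂ : 0 < Real.Gamma (1 - s) := Real.Gamma_pos_of_pos (by linarith)
  unfold Cds
  positivity

section WeightedL2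

variable {d : ℕ} {s γ : ℝ} {Ω : Set (EuclideanSpace ℝ (Fin d))}

lemma lintegral_weighted_sq_mul_volume_le (hs : s ∈ Set.Ioo (0 : ℝ) 1) {K : ℝ} (hK : 0 ≤ K)
    (hker : ∀ x, ∀ y ∈ Ω, ‖x - y‖ ^ ((d : ℝ) + 2 * s) ≤ K * (1 + ‖x‖ ^ ((d : ℝ) + 2 * γ)))
    {v : EuclideanSpace ℝ (Fin d) → ℝ} (hv : Measurable v) :
    (∫⁻ x, ENNReal.ofReal (|v x| ^ 2 / (1 + ‖x‖ ^ ((d : ℝ) + 2 * γ)))) * volume Ω ≤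
      (ENNReal.ofReal (2 * K) * (ENNReal.ofReal (Cds d s / 2))⁻¹ +
        2 * ∫⁻ x : EuclideanSpace ℝ (Fin d), ENNReal.ofReal ((1 + ‖x‖ ^ ((d : ℝ) + 2 * γ))⁻¹)) *
        Vnorm2 d s Ω v := by
  set c := ENNReal.ofReal (Cds d s / 2)
  set G : EuclideanSpace ℝ (Fin d) × EuclideanSpace ℝ (Fin d) → ℝ≥0∞ :=
    fun p => ENNReal.ofReal (|v p.1 - v p.2| ^ 2 / ‖p.1 - p.2‖ ^ ((d : ℝ) + 2 * s))
  set W := ∫⁻ x : EuclideanSpace ℝ (Fin d), ENNReal.ofReal ((1 + ‖x‖ ^ ((d : ℝ) + 2 * γ))⁻¹)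
  set L := ∫⁻ y in Ω, ENNReal.ofReal (v y ^ 2)
  have hc : c ≠ 0 := (ENNReal.ofReal_pos.2 (half_pos (Cds_pos hs))).ne'
  have hpointwise : ∀ x, ∀ y ∈ Ω,
      ENNReal.ofReal (|v x| ^ 2 / (1 + ‖x‖ ^ ((d : ℝ) + 2 * γ))) ≤
        ENNReal.ofReal (2 * K) * G (x, y) +
          2 * ENNReal.ofReal ((1 + ‖x‖ ^ ((d : ℝ) + 2 * γ))⁻¹) * ENNReal.ofReal (v y ^ 2) := by
    intro x y hy
    refine (ENNReal.ofReal_le_ofReal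
      (abs_sq_div_le_of_rpow_norm_sub_le v (by positivity) (hker x y hy))).trans_eq ?_
    rw [ENNReal.ofReal_add (by positivity) (by positivity),
      ENNReal.ofReal_mul (p := 2 * K) (q := |v x - v y| ^ 2 / _) (by positivity),
      ENNReal.ofReal_mul (p := 2 * _) (q := v y ^ 2) (by positivity),
      ENNReal.ofReal_mul (p := 2) (q := (1 + ‖x‖ ^ ((d : ℝ) + 2 * γ))⁻¹) zero_le_two,
      ENNReal.ofReal_ofNat]
  have hregion : ∫⁻ p in Set.univ ×ˢ Ω, G p ∂volume.prod volume ≤ c⁻¹ * Xsemi2 d s Ω v := by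
    rw [Xsemi2, ← mul_assoc, ENNReal.inv_mul_cancel hc ENNReal.ofReal_ne_top, one_mul,
      Measure.volume_eq_prod]
    exact lintegral_mono_set fun p hp => ⟨⟨trivial, trivial⟩, fun h => h.2 hp.2⟩
  calc (∫⁻ x, ENNReal.ofReal (|v x| ^ 2 / (1 + ‖x‖ ^ ((d : ℝ) + 2 * γ)))) * volume Ω
      ≤ ENNReal.ofReal (2 * K) * ∫⁻ p in Set.univ ×ˢ Ω, G p ∂volume.prod volume +
          (∫⁻ x, 2 * ENNReal.ofReal ((1 + ‖x‖ ^ ((d : ℝ) + 2 * γ))⁻¹)) * L :=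
        lintegral_mul_measure_le_of_forall_le_add _ (by fun_prop) (by fun_prop) (by fun_prop)
          hpointwise
    _ ≤ ENNReal.ofReal (2 * K) * (c⁻¹ * Xsemi2 d s Ω v) + 2 * W * L := by
        rw [lintegral_const_mul _ (by fun_prop)]
        gcongr
    _ ≤ (ENNReal.ofReal (2 * K) * c⁻¹ + 2 * W) * Vnorm2 d s Ω v := by
        rw [Vnorm2, ← mul_assoc, mul_add, add_comm]
        gcongr
        · exact le_add_self
        · exact le_self_add

theorem exists_lintegral_weighted_sq_le_mul_Vnorm2 (hs : s ∈ Set.Ioo (0 : ℝ) 1) (hγ : s ≤ γ)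
    (hΩb : Bornology.IsBounded Ω) (hΩpos : 0 < volume Ω) :
    ∃ M : ℝ≥0∞, M ≠ ⊤ ∧ ∀ v : EuclideanSpace ℝ (Fin d) → ℝ, Measurable v →
      ∫⁻ x, ENNReal.ofReal (|v x| ^ 2 / (1 + ‖x‖ ^ ((d : ℝ) + 2 * γ))) ≤ M * Vnorm2 d s Ω v := by
  obtain ⟨K, hK, hker⟩ := hΩb.exists_rpow_norm_sub_le (p := (d : ℝ) + 2 * s)
    (q := (d : ℝ) + 2 * γ) (by linarith [hs.1, (d.cast_nonneg : (0 : ℝ) ≤ d)]) (by linarith)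
  have hW :
      ∫⁻ x : EuclideanSpace ℝ (Fin d), ENNReal.ofReal ((1 + ‖x‖ ^ ((d : ℝ) + 2 * γ))⁻¹) ≠ ⊤ :=
    (lintegral_inv_one_add_norm_rpow_lt_top volume (by simp; linarith [hs.1])).ne
  have hc : ENNReal.ofReal (Cds d s / 2) ≠ 0 :=
    (ENNReal.ofReal_pos.2 (half_pos (Cds_pos hs))).ne'
  refine ⟨(ENNReal.ofReal (2 * K) * (ENNReal.ofReal (Cds d s / 2))⁻¹ +
      2 * ∫⁻ x : EuclideanSpace ℝ (Fin d), ENNReal.ofReal ((1 + ‖x‖ ^ ((d : ℝ) + 2 * γ))⁻¹)) /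
      volume Ω, ENNReal.div_ne_top (by finiteness) hΩpos.ne', fun v hv => ?_⟩
  rw [← ENNReal.mul_div_right_comm, ENNReal.le_div_iff_mul_le (Or.inl hΩpos.ne')
    (Or.inl hΩb.measure_lt_top.ne)]
  exact lintegral_weighted_sq_mul_volume_le hs hK hker hv

end WeightedL2

theorem trace_type_inequality_general (d : ℕ) (s γ : ℝ) (hs : s ∈ Set.Ioo (0 : ℝ) 1)
    (hγ : s ≤ γ) (Ω : Set (EuclideanSpace ℝ (Fin d))) (hΩb : Bornology.IsBounded Ω)
    (hΩpos : 0 < volume Ω) :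
    ∃ C : ℝ, 0 < C ∧
      ∀ v : EuclideanSpace ℝ (Fin d) → ℝ, Measurable v → Vnorm2 d s Ω v < ⊤ →
        (∫⁻ x, ENNReal.ofReal (|v x| ^ 2 / (1 + ‖x‖ ^ ((d : ℝ) + 2 * γ)))) ^ (1 / (2 : ℝ)) ≤
          ENNReal.ofReal C * (Vnorm2 d s Ω v) ^ (1 / (2 : ℝ)) := by
  obtain ⟨M, hM, hbound⟩ := exists_lintegral_weighted_sq_le_mul_Vnorm2 hs hγ hΩb hΩpos
  refine ⟨(M ^ (1 / (2 : ℝ))).toReal + 1, by positivity, fun v hv _ => ?_⟩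
  have hMC : M ^ (1 / (2 : ℝ)) ≤ ENNReal.ofReal ((M ^ (1 / (2 : ℝ))).toReal + 1) := by
    rw [← ENNReal.ofReal_toReal (ENNReal.rpow_ne_top_of_nonneg (by norm_num) hM)]
    exact ENNReal.ofReal_le_ofReal (by simp)
  calc (∫⁻ x, ENNReal.ofReal (|v x| ^ 2 / (1 + ‖x‖ ^ ((d : ℝ) + 2 * γ)))) ^ (1 / (2 : ℝ))
      ≤ (M * Vnorm2 d s Ω v) ^ (1 / (2 : ℝ)) := ENNReal.rpow_le_rpow (hbound v hv) (by norm_num)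
    _ = M ^ (1 / (2 : ℝ)) * Vnorm2 d s Ω v ^ (1 / (2 : ℝ)) :=
      ENNReal.mul_rpow_of_nonneg _ _ (by norm_num)
    _ ≤ _ := by gcongr

/-- Trace-type inequality: for `γ ≥ s` there is `C > 0` with
`‖v‖_{L²_γ(ℝᵈ)} ≤ C ‖v‖_𝕍` for all `v ∈ 𝕍`; hence `𝕍 ⊂ L²_γ(ℝᵈ)` continuously. -/
theorem trace_type_inequality (d : ℕ) (hd : 0 < d) (s γ : ℝ) (hs : s ∈ Set.Ioo (0 : ℝ) 1)
    (hγ : s ≤ γ) (Ω : Set (EuclideanSpace ℝ (Fin d))) (hΩb : Bornology.IsBounded Ω)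
    (hΩm : MeasurableSet Ω) (hΩpos : 0 < volume Ω) :
    ∃ C : ℝ, 0 < C ∧
      ∀ v : EuclideanSpace ℝ (Fin d) → ℝ, Measurable v → Vnorm2 d s Ω v < ⊤ →
        (∫⁻ x, ENNReal.ofReal (|v x| ^ 2 / (1 + ‖x‖ ^ ((d : ℝ) + 2 * γ)))) ^ (1 / (2 : ℝ)) ≤
          ENNReal.ofReal C * (Vnorm2 d s Ω v) ^ (1 / (2 : ℝ)) :=
  trace_type_inequality_general d s γ hs hγ Ω hΩb hΩpos
end

section
/- If $\gamma < s$, then $\mathbb{V} \nsubseteq L^2_\gamma(\mathbb{R}^d)$: there exists a measurable function $v : \mathbb{R}^d \to \mathbb{R}$ with $\|v\|_{\mathbb{V}} < \infty$ but $\int_{\mathbb{R}^d} \frac{|v(x)|^2}{1+|x|^{d+2\gamma}}\,dx = \infty$. -/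
open MeasureTheory
open scoped ENNReal

/-!
Take `v = |x|^a` outside a ball `B(0, R)` containing `2Ω` and `v = 0` inside, with
`a = max γ 0 < s`. Since both parts of the `𝕍`-norm grow with `Ω`, it suffices to treat
`Ω = B(0, R/2)`, where `v` vanishes: the kernel `|v x - v y|² / |x - y|^(d+2s)` is then
`O((1 + |y|)^(2a - d - 2s))` uniformly in `x ∈ Ω`, integrable in `y` because `a < s`.
On the other hand `|v x|² / (1 + |x|^(d+2γ)) ≥ |x|^(-d) / 2` for `|x| ≥ R`, and `|x|^(-d)`
is not integrable at infinity.
-/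

open Metric Set Module

section General

variable {E : Type*} [NormedAddCommGroup E] [NormedSpace ℝ E] [FiniteDimensional ℝ E]
  [MeasurableSpace E] [BorelSpace E] (μ : Measure E) [μ.IsAddHaarMeasure]

/-- In polar coordinates this is `∫_R^∞ t⁻¹ dt = ∞`. -/
theorem lintegral_compl_ball_norm_rpow_neg_finrank_eq_top [Nontrivial E] {R : ℝ} (hR : 0 < R) :
    ∫⁻ x in (ball (0 : E) R)ᶜ, ENNReal.ofReal (‖x‖ ^ (-(finrank ℝ E : ℝ))) ∂μ = ⊤ := by
  set n := finrank ℝ E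
  by_contra hfin
  have hint : Integrable (fun x : E ↦ (Ici R).indicator (fun t ↦ t ^ (-(n : ℝ))) ‖x‖) μ := by
    have hon : IntegrableOn (fun x : E ↦ ‖x‖ ^ (-(n : ℝ))) (ball 0 R)ᶜ μ :=
      ⟨(measurable_norm.pow_const _).aestronglyMeasurable,
        (hasFiniteIntegral_iff_ofReal (.of_forall fun x ↦ by positivity)).2
          (lt_top_iff_ne_top.2 hfin)⟩
    refine (integrable_indicator_iff measurableSet_ball.compl).2 hon |>.congr (.of_forall ?_)
    intro x
    by_cases hx : R ≤ ‖x‖ <;> simp [indicator, hx]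
  rw [integrable_fun_norm_addHaar] at hint
  have hinv : IntegrableOn (fun t : ℝ ↦ t ^ (-1 : ℝ)) (Ioi R) := by
    refine (hint.mono_set (Ioi_subset_Ioi hR.le)).congr_fun (fun t (ht : R < t) ↦ ?_)
      measurableSet_Ioi
    have ht0 : 0 < t := hR.trans ht
    have hn : 1 ≤ n := Module.finrank_pos
    change t ^ (n - 1) • (Ici R).indicator (fun t ↦ t ^ (-(n : ℝ))) t = t ^ (-1 : ℝ)
    rw [indicator_of_mem (mem_Ici.2 ht.le), smul_eq_mul, ← Real.rpow_natCast,
      ← Real.rpow_add ht0, Nat.cast_sub hn]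
    ring_nf
  exact lt_irrefl _ ((integrableOn_Ioi_rpow_iff hR).1 hinv)

theorem lintegral_eq_top_of_rpow_neg_finrank_le [Nontrivial E] {f : E → ℝ≥0∞} {c R : ℝ}
    (hc : 0 < c) (hR : 0 < R)
    (hf : ∀ x, R ≤ ‖x‖ → ENNReal.ofReal (c * ‖x‖ ^ (-(finrank ℝ E : ℝ))) ≤ f x) :
    ∫⁻ x, f x ∂μ = ⊤ := by
  refine top_unique ?_
  calc (⊤ : ℝ≥0∞)
      = ENNReal.ofReal c *
          ∫⁻ x in (ball (0 : E) R)ᶜ, ENNReal.ofReal (‖x‖ ^ (-(finrank ℝ E : ℝ))) ∂μ := by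
        rw [lintegral_compl_ball_norm_rpow_neg_finrank_eq_top μ hR,
          ENNReal.mul_top (by simpa using hc)]
    _ = ∫⁻ x in (ball (0 : E) R)ᶜ, ENNReal.ofReal (c * ‖x‖ ^ (-(finrank ℝ E : ℝ))) ∂μ := by
        rw [← lintegral_const_mul' _ _ ENNReal.ofReal_ne_top]
        simp_rw [ENNReal.ofReal_mul hc.le]
    _ ≤ ∫⁻ x in (ball (0 : E) R)ᶜ, f x ∂μ :=
        setLIntegral_mono' measurableSet_ball.compl fun x hx ↦ hf x (by simpa using hx)
    _ ≤ ∫⁻ x, f x ∂μ := setLIntegral_le_lintegral _ _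

end General

theorem setLIntegral_prod_diff_compl_le {α : Type*} [MeasurableSpace α] (μ : Measure α)
    [SFinite μ] {F : α × α → ℝ≥0∞} (hF : ∀ x y, F (x, y) = F (y, x)) (B : Set α) :
    ∫⁻ p in (univ ×ˢ univ) \ (Bᶜ ×ˢ Bᶜ), F p ∂μ.prod μ ≤
      2 * ∫⁻ x in B, ∫⁻ y, F (x, y) ∂μ ∂μ := by
  have hsub : (univ ×ˢ univ) \ (Bᶜ ×ˢ Bᶜ) ⊆ (B ×ˢ univ) ∪ (univ ×ˢ B) := by
    rintro ⟨x, y⟩ ⟨-, hp⟩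
    by_cases hx : x ∈ B
    · exact Or.inl ⟨hx, mem_univ _⟩
    · exact Or.inr ⟨mem_univ _, by_contra fun hy ↦ hp ⟨hx, hy⟩⟩
  have hleft : ∫⁻ p in B ×ˢ univ, F p ∂μ.prod μ ≤ ∫⁻ x in B, ∫⁻ y, F (x, y) ∂μ ∂μ := by
    rw [← Measure.prod_restrict, Measure.restrict_univ]
    exact lintegral_prod_le F
  have hright : ∫⁻ p in univ ×ˢ B, F p ∂μ.prod μ ≤ ∫⁻ x in B, ∫⁻ y, F (x, y) ∂μ ∂μ := by
    rw [← Measure.prod_restrict, Measure.restrict_univ, ← lintegral_prod_swap]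
    simp_rw [Prod.swap, ← hF]
    exact lintegral_prod_le F
  calc ∫⁻ p in (univ ×ˢ univ) \ (Bᶜ ×ˢ Bᶜ), F p ∂μ.prod μ
      ≤ ∫⁻ p in (B ×ˢ univ) ∪ (univ ×ˢ B), F p ∂μ.prod μ := lintegral_mono_set hsub
    _ ≤ (∫⁻ p in B ×ˢ univ, F p ∂μ.prod μ) + ∫⁻ p in univ ×ˢ B, F p ∂μ.prod μ :=
        lintegral_union_le _ _ _
    _ ≤ 2 * ∫⁻ x in B, ∫⁻ y, F (x, y) ∂μ ∂μ := by rw [two_mul]; exact add_le_add hleft hright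

theorem half_rpow_neg_le_sq_rpow_div {t n a γ : ℝ} (ht : 1 ≤ t) (hγa : γ ≤ a)
    (hna : 0 ≤ n + 2 * a) :
    1 / 2 * t ^ (-n) ≤ (t ^ a) ^ 2 / (1 + t ^ (n + 2 * γ)) := by
  have ht0 : 0 < t := one_pos.trans_le ht
  have hden : 1 + t ^ (n + 2 * γ) ≤ 2 * t ^ (n + 2 * a) := by
    have h1 : 1 ≤ t ^ (n + 2 * a) := Real.one_le_rpow ht hna
    have h2 : t ^ (n + 2 * γ) ≤ t ^ (n + 2 * a) := Real.rpow_le_rpow_of_exponent_le ht (by linarith)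
    linarith
  calc 1 / 2 * t ^ (-n) = (t ^ a) ^ 2 / (2 * t ^ (n + 2 * a)) := by
        rw [Real.rpow_add ht0, Real.rpow_neg ht0.le, ← Real.rpow_natCast, ← Real.rpow_mul ht0.le]
        field_simp
        norm_num [mul_comm]
    _ ≤ (t ^ a) ^ 2 / (1 + t ^ (n + 2 * γ)) := by gcongr

section Witness

variable {E : Type*} [NormedAddCommGroup E]

noncomputable def tailRpow (R a : ℝ) (x : E) : ℝ := if R ≤ ‖x‖ then ‖x‖ ^ a else 0

theorem sq_tailRpow_sub_div_le {R a e : ℝ} (hR : 1 ≤ R) (ha : 0 ≤ a)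
    (he : 0 ≤ e) {x : E} (hx : ‖x‖ ≤ R / 2) (y : E) :
    |tailRpow R a x - tailRpow R a y| ^ 2 / ‖x - y‖ ^ e ≤ 4 ^ e * (1 + ‖y‖) ^ (2 * a - e) := by
  have hvx : tailRpow R a x = 0 := if_neg (by linarith)
  by_cases hy : R ≤ ‖y‖
  · set u := 1 + ‖y‖
    have hu : 0 < u := by positivity
    have hnum : ‖y‖ ^ a ≤ u ^ a := Real.rpow_le_rpow (norm_nonneg y) (by linarith) ha
    have hdist : u / 4 ≤ ‖x - y‖ := by linarith [norm_sub_norm_le y x, norm_sub_rev x y]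
    calc |tailRpow R a x - tailRpow R a y| ^ 2 / ‖x - y‖ ^ e
        = (‖y‖ ^ a) ^ 2 / ‖x - y‖ ^ e := by
          rw [hvx, tailRpow, if_pos hy, zero_sub, abs_neg, sq_abs]
      _ ≤ (u ^ a) ^ 2 / (u / 4) ^ e := by gcongr
      _ = 4 ^ e * u ^ (2 * a - e) := by
          rw [Real.div_rpow hu.le (by norm_num), Real.rpow_sub hu, ← Real.rpow_natCast,
            ← Real.rpow_mul hu.le]
          field_simp
          norm_num
  · rw [hvx, tailRpow, if_neg hy, sub_zero, abs_zero, zero_pow two_ne_zero, zero_div]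
    positivity

variable [MeasurableSpace E] [OpensMeasurableSpace E]

theorem measurable_tailRpow (R a : ℝ) : Measurable (tailRpow R a : E → ℝ) :=
  Measurable.ite (measurableSet_le measurable_const measurable_norm)
    (measurable_norm.pow_const a) measurable_const

end Witness

section Vnorm

variable {d : ℕ} {s : ℝ}

theorem Xsemi2_mono {Ω Ω' : Set (EuclideanSpace ℝ (Fin d))} (h : Ω ⊆ Ω')
    (v : EuclideanSpace ℝ (Fin d) → ℝ) : Xsemi2 d s Ω v ≤ Xsemi2 d s Ω' v := by
  unfold Xsemi2
  gcongr

theorem Vnorm2_mono {Ω Ω' : Set (EuclideanSpace ℝ (Fin d))} (h : Ω ⊆ Ω')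
    (v : EuclideanSpace ℝ (Fin d) → ℝ) : Vnorm2 d s Ω v ≤ Vnorm2 d s Ω' v :=
  add_le_add (lintegral_mono_set h) (Xsemi2_mono h v)

variable {R a : ℝ}

theorem Xsemi2_closedBall_tailRpow_lt_top (hs : 0 < s) (ha : 0 ≤ a) (has : a < s) (hR : 1 ≤ R) :
    Xsemi2 d s (closedBall 0 (R / 2)) (tailRpow R a) < ⊤ := by
  set e : ℝ := d + 2 * s
  set K := ∫⁻ y : EuclideanSpace ℝ (Fin d), ENNReal.ofReal (4 ^ e * (1 + ‖y‖) ^ (2 * a - e))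
  have hK : K < ⊤ := by
    simp_rw [K, ENNReal.ofReal_mul (Real.rpow_nonneg (by norm_num : (0 : ℝ) ≤ 4) e)]
    rw [lintegral_const_mul' _ _ ENNReal.ofReal_ne_top]
    refine ENNReal.mul_lt_top ENNReal.ofReal_lt_top ?_
    simpa using finite_integral_one_add_norm (μ := (volume : Measure (EuclideanSpace ℝ (Fin d))))
      (r := e - 2 * a) (by rw [finrank_euclideanSpace_fin]; linarith)
  refine ENNReal.mul_lt_top ENNReal.ofReal_lt_top ?_
  rw [Measure.volume_eq_prod]
  calc _ ≤ 2 * ∫⁻ x in closedBall (0 : EuclideanSpace ℝ (Fin d)) (R / 2), ∫⁻ y,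
          ENNReal.ofReal (|tailRpow R a x - tailRpow R a y| ^ 2 / ‖x - y‖ ^ e) :=
        setLIntegral_prod_diff_compl_le volume (fun x y ↦ by rw [abs_sub_comm, norm_sub_rev]) _
    _ ≤ 2 * ∫⁻ _ in closedBall (0 : EuclideanSpace ℝ (Fin d)) (R / 2), K := by
        refine mul_le_mul_right (setLIntegral_mono' measurableSet_closedBall fun x hx ↦ ?_) 2
        exact lintegral_mono fun y ↦ ENNReal.ofReal_le_ofReal <|
          sq_tailRpow_sub_div_le hR ha (by positivity) (mem_closedBall_zero_iff.1 hx) y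
    _ < ⊤ := by
        rw [setLIntegral_const]
        exact ENNReal.mul_lt_top (by simp) (ENNReal.mul_lt_top hK measure_closedBall_lt_top)

theorem Vnorm2_closedBall_tailRpow_lt_top (hs : 0 < s) (ha : 0 ≤ a) (has : a < s) (hR : 1 ≤ R) :
    Vnorm2 d s (closedBall 0 (R / 2)) (tailRpow R a) < ⊤ := by
  have hvanish : EqOn (fun x ↦ ENNReal.ofReal (tailRpow R a x ^ 2)) 0
      (closedBall (0 : EuclideanSpace ℝ (Fin d)) (R / 2)) := fun x hx ↦ by
    have : ‖x‖ < R := (mem_closedBall_zero_iff.1 hx).trans_lt (by linarith)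
    simp [tailRpow, not_le.2 this]
  rw [Vnorm2, setLIntegral_congr_fun measurableSet_closedBall hvanish, Pi.zero_def,
    lintegral_zero, zero_add]
  exact Xsemi2_closedBall_tailRpow_lt_top hs ha has hR

end Vnorm

theorem not_embedded_below_critical_general (d : ℕ) (hd : 0 < d) (s γ : ℝ)
    (hs : s ∈ Set.Ioo (0 : ℝ) 1) (hγ : γ < s)
    (Ω : Set (EuclideanSpace ℝ (Fin d))) (hΩb : Bornology.IsBounded Ω) :
    ∃ v : EuclideanSpace ℝ (Fin d) → ℝ, Measurable v ∧ Vnorm2 d s Ω v < ⊤ ∧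
      (∫⁻ x, ENNReal.ofReal (|v x| ^ 2 / (1 + ‖x‖ ^ ((d : ℝ) + 2 * γ)))) = ⊤ := by
  obtain ⟨r, hr⟩ := hΩb.subset_closedBall 0
  set R := max 1 (2 * r)
  have hR : 1 ≤ R := le_max_left _ _
  have hΩR : Ω ⊆ closedBall 0 (R / 2) :=
    hr.trans (closedBall_subset_closedBall (by linarith [le_max_right 1 (2 * r)]))
  set a := max γ 0
  refine ⟨tailRpow R a, measurable_tailRpow R a, ?_, ?_⟩
  · exact (Vnorm2_mono hΩR _).trans_lt
      (Vnorm2_closedBall_tailRpow_lt_top hs.1 (le_max_right _ _) (max_lt hγ hs.1) hR)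
  · have : Nonempty (Fin d) := ⟨⟨0, hd⟩⟩
    refine lintegral_eq_top_of_rpow_neg_finrank_le volume one_half_pos (one_pos.trans_le hR)
      fun x hx ↦ ENNReal.ofReal_le_ofReal ?_
    rw [finrank_euclideanSpace_fin, tailRpow, if_pos hx, sq_abs]
    exact half_rpow_neg_le_sq_rpow_div (hR.trans hx) (le_max_left _ _) (by positivity)

/-- If `γ < s`, then `𝕍 ⊄ L²_γ(ℝᵈ)`: there is a measurable `v` with `‖v‖_𝕍 < ∞` but
infinite weighted `L²` norm. -/
theorem not_embedded_below_critical (d : ℕ) (hd : 0 < d) (s γ : ℝ)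
    (hs : s ∈ Set.Ioo (0 : ℝ) 1) (hγ : γ < s)
    (Ω : Set (EuclideanSpace ℝ (Fin d))) (hΩb : Bornology.IsBounded Ω)
    (hΩm : MeasurableSet Ω) (hΩpos : 0 < volume Ω) :
    ∃ v : EuclideanSpace ℝ (Fin d) → ℝ, Measurable v ∧ Vnorm2 d s Ω v < ⊤ ∧
      (∫⁻ x, ENNReal.ofReal (|v x| ^ 2 / (1 + ‖x‖ ^ ((d : ℝ) + 2 * γ)))) = ⊤ :=
  not_embedded_below_critical_general d hd s γ hs hγ Ω hΩb
end
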